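/- arXiv:2301.06131 — 2 statements merged into one kernel-verified Lean document; each statement's English description precedes it below -/
import Mathlib

section
/- Let K be a convex body in ℝⁿ with 0 in its interior, and let A be a Borel subset of ∂K such that vol(C(A)) ≠ 0, where C(A) = {r·x : 0 ≤ r ≤ 1, x ∈ A}. Then for every x ∈ K one has ⟨x, V(A)⟩ ≤ n·vol(C(A)), where V(A) = ∫_A n_K(z) dH^{n−1}(z) is the integral over A of the outer unit normal to K (defined H^{n−1}-almost everywhere on ∂K). Consequently V(A)/(n·vol(C(A))) ∈ K*. -/
open MeasureTheory Filter
open scoped InnerProductSpace Pointwise NNReal ENNReal Topology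

noncomputable section

/-- The polar of a set `K` in Euclidean space: `{y | ⟨x,y⟩ ≤ 1 for all x ∈ K}`. -/
def polarSet {n : ℕ} (K : Set (EuclideanSpace ℝ (Fin n))) : Set (EuclideanSpace ℝ (Fin n)) :=
  {y | ∀ x ∈ K, ⟪x, y⟫_ℝ ≤ 1}

/-- A convex body: a compact convex set with nonempty interior. -/
structure IsConvexBody {n : ℕ} (K : Set (EuclideanSpace ℝ (Fin n))) : Prop where
  convex : Convex ℝ K
  isCompact : IsCompact K
  nonempty_interior : (interior K).Nonempty

/-- The cone over a set `A`: `C(A) = {r • x : 0 ≤ r ≤ 1, x ∈ A}`. -/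
def coneOver {n : ℕ} (A : Set (EuclideanSpace ℝ (Fin n))) : Set (EuclideanSpace ℝ (Fin n)) :=
  {y | ∃ r : ℝ, 0 ≤ r ∧ r ≤ 1 ∧ ∃ x ∈ A, y = r • x}

/-- Let `K` be a convex body with `0 ∈ int K`, let `ν` be the outer unit normal of `K`
(defined `H^{n-1}`-a.e. on `∂K`, and satisfying a.e. `⟨x, ν z⟩ ≤ ⟨z, ν z⟩` for `x ∈ K`),
and let `A ⊆ ∂K` be Borel with `vol(C(A)) ≠ 0`, where
`vol(C(A)) = (1/n)∫_A ⟨z, ν z⟩ dH^{n-1}`. Then with `V(A) = ∫_A ν dH^{n-1}` one has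
`⟨x, V(A)⟩ ≤ n·vol(C(A))` for every `x ∈ K`; consequently `V(A)/(n·vol(C(A))) ∈ K*`. -/
theorem cone_normal_polar (n : ℕ) (K : Set (EuclideanSpace ℝ (Fin n))) (hK : IsConvexBody K)
    (h0 : (0 : EuclideanSpace ℝ (Fin n)) ∈ interior K)
    (ν : EuclideanSpace ℝ (Fin n) → EuclideanSpace ℝ (Fin n))
    (hν : ∀ᵐ z ∂((μH[(n : ℝ) - 1]).restrict (frontier K)),
      ‖ν z‖ = 1 ∧ ∀ x ∈ K, ⟪x, ν z⟫_ℝ ≤ ⟪z, ν z⟫_ℝ)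
    (A : Set (EuclideanSpace ℝ (Fin n))) (hA : A ⊆ frontier K) (hAm : MeasurableSet A)
    (hcone : (volume (coneOver A)).toReal =
      (1 / n) * ∫ z in A, ⟪z, ν z⟫_ℝ ∂(μH[(n : ℝ) - 1]))
    (hvol : volume (coneOver A) ≠ 0) :
    (∀ x ∈ K, ⟪x, ∫ z in A, ν z ∂(μH[(n : ℝ) - 1])⟫_ℝ ≤ n * (volume (coneOver A)).toReal) ∧
    (n * (volume (coneOver A)).toReal)⁻¹ • (∫ z in A, ν z ∂(μH[(n : ℝ) - 1])) ∈ polarSet K := by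
    classical
  set μ := (μH[(n : ℝ) - 1] : Measure (EuclideanSpace ℝ (Fin n)))
  have hKclosed : IsClosed K := hK.isCompact.isClosed
  have hfrK : frontier K ⊆ K := hKclosed.frontier_subset
  have h0K : (0 : EuclideanSpace ℝ (Fin n)) ∈ K := interior_subset h0
  have hconeK : coneOver A ⊆ K := by
    rintro y ⟨r, hr0, hr1, x, hxA, rfl⟩
    have hxK : x ∈ K := hfrK (hA hxA)
    have := hK.convex hxK h0K hr0 (by linarith : (0:ℝ) ≤ 1 - r) (by ring)
    simpa using this
  have hvlt : volume (coneOver A) < ⊤ :=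
    lt_of_le_of_lt (measure_mono hconeK) hK.isCompact.measure_lt_top
  set c := (volume (coneOver A)).toReal with hc
  have hcpos : 0 < c := ENNReal.toReal_pos hvol hvlt.ne
  have hn : (n : ℝ) ≠ 0 := by
    intro h
    rw [h] at hcone
    simp at hcone
    linarith
  have hnc : 0 < (n : ℝ) * c := by
    have : 0 < (n : ℝ) := lt_of_le_of_ne (Nat.cast_nonneg n) (Ne.symm hn)
    positivity
  have hae : ∀ᵐ z ∂(μ.restrict A),
      ‖ν z‖ = 1 ∧ ∀ x ∈ K, ⟪x, ν z⟫_ℝ ≤ ⟪z, ν z⟫_ℝ :=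
    ae_mono (Measure.restrict_mono hA le_rfl) hν
  have h1 : ∀ x ∈ K, ⟪x, ∫ z in A, ν z ∂μ⟫_ℝ ≤ n * c := by
    intro x hx
    by_cases hInt : IntegrableOn ν A μ
    · -- bound on K
      obtain ⟨R, hR⟩ := isBounded_iff_forall_norm_le.1 hK.isCompact.isBounded
      have hInt1 : Integrable (fun z => ⟪x, ν z⟫_ℝ) (μ.restrict A) :=
        (innerSL ℝ x).integrable_comp hInt
      have hInt2 : Integrable (fun z => ⟪z, ν z⟫_ℝ) (μ.restrict A) := by
        refine Integrable.mono (hInt.norm.const_mul R)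
          (AEStronglyMeasurable.inner aestronglyMeasurable_id hInt.1) ?_
        filter_upwards [ae_restrict_mem hAm] with z hz
        have hzK : z ∈ K := hfrK (hA hz)
        have h1 : |⟪z, ν z⟫_ℝ| ≤ ‖z‖ * ‖ν z‖ := abs_real_inner_le_norm _ _
        have h2 : ‖z‖ * ‖ν z‖ ≤ R * ‖ν z‖ :=
          mul_le_mul_of_nonneg_right (hR z hzK) (norm_nonneg _)
        calc ‖⟪z, ν z⟫_ℝ‖ = |⟪z, ν z⟫_ℝ| := rfl
          _ ≤ R * ‖ν z‖ := le_trans h1 h2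
          _ ≤ ‖R * ‖ν z‖‖ := le_abs_self _
      have hswap : ⟪x, ∫ z in A, ν z ∂μ⟫_ℝ = ∫ z in A, ⟪x, ν z⟫_ℝ ∂μ := by
        have := ContinuousLinearMap.integral_comp_comm (innerSL ℝ x) hInt
        simpa using this.symm
      have hmono : ∫ z in A, ⟪x, ν z⟫_ℝ ∂μ ≤ ∫ z in A, ⟪z, ν z⟫_ℝ ∂μ := by
        refine integral_mono_ae hInt1 hInt2 ?_
        filter_upwards [hae] with z hz
        exact hz.2 x hx
      have hval : (n : ℝ) * c = ∫ z in A, ⟪z, ν z⟫_ℝ ∂μ := by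
        rw [hcone]
        field_simp
      rw [hswap]
      linarith [hmono, hval]
    · rw [integral_undef hInt]
      simpa using le_of_lt hnc
  refine ⟨h1, ?_⟩
  intro x hx
  rw [real_inner_smul_right]
  calc ((n : ℝ) * c)⁻¹ * ⟪x, ∫ z in A, ν z ∂μ⟫_ℝ
      ≤ ((n : ℝ) * c)⁻¹ * ((n : ℝ) * c) := by
        exact mul_le_mul_of_nonneg_left (h1 x hx) (inv_nonneg.2 hnc.le)
    _ = 1 := inv_mul_cancel₀ hnc.ne'
end
end

section
/- Let K be a convex body in ℝⁿ with 0 in its interior. If A ⊂ ∂K and B ⊂ ∂(K*) are Borel subsets such that vol(C(A)) > 0 and vol(C(B)) > 0, then ⟨V(A), V(B)⟩ ≤ n²·vol(C(A))·vol(C(B)), where V(A) = ∫_A n_K(z) dH^{n−1}(z) and V(B) = ∫_B n_{K*}(z) dH^{n−1}(z). -/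
open MeasureTheory Filter
open scoped InnerProductSpace Pointwise NNReal ENNReal Topology

noncomputable section

/-- Let `K` be a convex body with `0 ∈ int K`, with outer unit normals `ν` of `K` and
`ω` of `K*` (defined `H^{n-1}`-a.e.), and let `A ⊆ ∂K`, `B ⊆ ∂(K*)` be Borel sets whose
cones have positive volume, where `vol(C(A)) = (1/n)∫_A ⟨z, ν z⟩ dH^{n-1}` and similarly
for `B`. Then `⟨V(A), V(B)⟩ ≤ n²·vol(C(A))·vol(C(B))`, where `V(A) = ∫_A ν dH^{n-1}` and
`V(B) = ∫_B ω dH^{n-1}`. -/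
theorem cone_normal_pairing (n : ℕ) (K : Set (EuclideanSpace ℝ (Fin n))) (hK : IsConvexBody K)
    (h0 : (0 : EuclideanSpace ℝ (Fin n)) ∈ interior K)
    (ν ω : EuclideanSpace ℝ (Fin n) → EuclideanSpace ℝ (Fin n))
    (hν : ∀ᵐ z ∂((μH[(n : ℝ) - 1]).restrict (frontier K)),
      ‖ν z‖ = 1 ∧ ∀ x ∈ K, ⟪x, ν z⟫_ℝ ≤ ⟪z, ν z⟫_ℝ)
    (hω : ∀ᵐ z ∂((μH[(n : ℝ) - 1]).restrict (frontier (polarSet K))),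
      ‖ω z‖ = 1 ∧ ∀ y ∈ polarSet K, ⟪y, ω z⟫_ℝ ≤ ⟪z, ω z⟫_ℝ)
    (A B : Set (EuclideanSpace ℝ (Fin n)))
    (hA : A ⊆ frontier K) (hAm : MeasurableSet A)
    (hB : B ⊆ frontier (polarSet K)) (hBm : MeasurableSet B)
    (hconeA : (volume (coneOver A)).toReal =
      (1 / n) * ∫ z in A, ⟪z, ν z⟫_ℝ ∂(μH[(n : ℝ) - 1]))
    (hconeB : (volume (coneOver B)).toReal =
      (1 / n) * ∫ z in B, ⟪z, ω z⟫_ℝ ∂(μH[(n : ℝ) - 1]))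
    (hvolA : 0 < volume (coneOver A)) (hvolB : 0 < volume (coneOver B)) :
    ⟪∫ z in A, ν z ∂(μH[(n : ℝ) - 1]), ∫ z in B, ω z ∂(μH[(n : ℝ) - 1])⟫_ℝ ≤
      (n : ℝ) ^ 2 * (volume (coneOver A)).toReal * (volume (coneOver B)).toReal := by
  classical
  set μ := (μH[(n : ℝ) - 1] : Measure (EuclideanSpace ℝ (Fin n))) with hμ
  -- K is closed, frontier K ⊆ K
  have hKcl : IsClosed K := hK.isCompact.isClosed
  have hfrK : frontier K ⊆ K := hKcl.frontier_subset
  -- small ball inside K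
  obtain ⟨ε, hε, hballK'⟩ := Metric.mem_nhds_iff.mp (mem_interior_iff_mem_nhds.mp h0)
  have hballK : Metric.ball (0 : EuclideanSpace ℝ (Fin n)) ε ⊆ K := hballK'
  -- K bounded
  obtain ⟨R₀, hR₀⟩ := hK.isCompact.isBounded.subset_closedBall 0
  set R : ℝ := max R₀ 1 with hRdef
  have hR1 : (1 : ℝ) ≤ R := le_max_right _ _
  have hR : K ⊆ Metric.closedBall 0 R :=
    hR₀.trans (Metric.closedBall_subset_closedBall (le_max_left _ _))
  have hRpos : (0 : ℝ) < R := lt_of_lt_of_le one_pos hR1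
  -- polarSet K is bounded
  have hpolar_bdd : polarSet K ⊆ Metric.closedBall 0 (2 / ε) := by
    intro y hy
    rw [Metric.mem_closedBall, dist_zero_right]
    rcases eq_or_ne y 0 with rfl | hy0
    · simp only [norm_zero]; positivity
    · have hny : 0 < ‖y‖ := norm_pos_iff.mpr hy0
      have hx : ((ε / 2) * ‖y‖⁻¹) • y ∈ K := by
        apply hballK
        rw [Metric.mem_ball, dist_zero_right, norm_smul]
        have : ‖(ε / 2) * ‖y‖⁻¹‖ = (ε / 2) * ‖y‖⁻¹ := by
          rw [Real.norm_eq_abs, abs_of_nonneg]; positivity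
        rw [this, mul_assoc, inv_mul_cancel₀ hny.ne', mul_one]
        linarith
      have := hy _ hx
      rw [real_inner_smul_left, real_inner_self_eq_norm_sq] at this
      have h2 : (ε / 2) * ‖y‖⁻¹ * ‖y‖ ^ 2 = (ε / 2) * ‖y‖ := by
        field_simp
      rw [h2] at this
      rw [le_div_iff₀ hε]
      nlinarith
  have hfrP : frontier (polarSet K) ⊆ Metric.closedBall 0 (2 / ε) :=
    frontier_subset_closure.trans
      (closure_minimal hpolar_bdd Metric.isClosed_closedBall)
  -- volumes are finite
  have hCA : coneOver A ⊆ Metric.closedBall 0 R := by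
    rintro y ⟨r, hr0, hr1, x, hx, rfl⟩
    rw [Metric.mem_closedBall, dist_zero_right, norm_smul, Real.norm_eq_abs,
      abs_of_nonneg hr0]
    have hxR : ‖x‖ ≤ R := by
      have := hR (hfrK (hA hx))
      rwa [Metric.mem_closedBall, dist_zero_right] at this
    nlinarith [norm_nonneg x]
  have hCB : coneOver B ⊆ Metric.closedBall 0 (2 / ε) := by
    rintro y ⟨r, hr0, hr1, x, hx, rfl⟩
    rw [Metric.mem_closedBall, dist_zero_right, norm_smul, Real.norm_eq_abs,
      abs_of_nonneg hr0]
    have hxR : ‖x‖ ≤ 2 / ε := by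
      have := hfrP (hB hx)
      rwa [Metric.mem_closedBall, dist_zero_right] at this
    nlinarith [norm_nonneg x]
  have hfinA : volume (coneOver A) ≠ ⊤ :=
    ((measure_mono hCA).trans_lt (measure_closedBall_lt_top)).ne
  have hfinB : volume (coneOver B) ≠ ⊤ :=
    ((measure_mono hCB).trans_lt (measure_closedBall_lt_top)).ne
  have hposA : 0 < (volume (coneOver A)).toReal := ENNReal.toReal_pos hvolA.ne' hfinA
  have hposB : 0 < (volume (coneOver B)).toReal := ENNReal.toReal_pos hvolB.ne' hfinB
  -- the scalar integrals
  set IA : ℝ := ∫ z in A, ⟪z, ν z⟫_ℝ ∂μ with hIA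
  set IB : ℝ := ∫ z in B, ⟪z, ω z⟫_ℝ ∂μ with hIB
  have hnIA : 0 < (1 / (n : ℝ)) * IA := hconeA ▸ hposA
  have hnIB : 0 < (1 / (n : ℝ)) * IB := hconeB ▸ hposB
  have hn : (0 : ℝ) < n := by
    by_contra h
    have : (n : ℝ) = 0 := le_antisymm (not_lt.mp h) (Nat.cast_nonneg n)
    rw [this] at hnIA; simp at hnIA
  have hIApos : 0 < IA := by
    by_contra h
    nlinarith [one_div_pos.mpr hn]
  have hIBpos : 0 < IB := by
    by_contra h
    nlinarith [one_div_pos.mpr hn]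
  -- integrability of the scalar integrands
  have hIntgA : Integrable (fun z => ⟪z, ν z⟫_ℝ) (μ.restrict A) := by
    by_contra h
    rw [hIA, integral_undef h] at hIApos; exact lt_irrefl _ hIApos
  have hIntgB : Integrable (fun z => ⟪z, ω z⟫_ℝ) (μ.restrict B) := by
    by_contra h
    rw [hIB, integral_undef h] at hIBpos; exact lt_irrefl _ hIBpos
  -- RHS equals IA * IB
  have hRHS : (n : ℝ) ^ 2 * (volume (coneOver A)).toReal * (volume (coneOver B)).toReal
      = IA * IB := by
    rw [hconeA, hconeB]
    field_simp
  rw [hRHS]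
  -- a.e. properties on A and B
  have hνA : ∀ᵐ z ∂μ.restrict A,
      0 < ⟪z, ν z⟫_ℝ ∧ (⟪z, ν z⟫_ℝ)⁻¹ • ν z ∈ polarSet K := by
    filter_upwards [ae_restrict_of_ae_restrict_of_subset hA hν] with z hz
    obtain ⟨hn1, hsup⟩ := hz
    have hgz : 0 < ⟪z, ν z⟫_ℝ := by
      have hx : (ε / 2) • ν z ∈ K := by
        apply hballK
        rw [Metric.mem_ball, dist_zero_right, norm_smul, hn1, mul_one,
          Real.norm_eq_abs, abs_of_nonneg (by linarith : (0:ℝ) ≤ ε / 2)]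
        linarith
      have := hsup _ hx
      rw [real_inner_smul_left, real_inner_self_eq_norm_sq, hn1] at this
      nlinarith
    refine ⟨hgz, fun x hx => ?_⟩
    rw [real_inner_smul_right, inv_mul_le_iff₀ hgz, mul_one]
    exact hsup x hx
  have hωB : ∀ᵐ w ∂μ.restrict B,
      0 < ⟪w, ω w⟫_ℝ ∧ ∀ y ∈ polarSet K, ⟪y, ω w⟫_ℝ ≤ ⟪w, ω w⟫_ℝ := by
    filter_upwards [ae_restrict_of_ae_restrict_of_subset hB hω] with w hw
    obtain ⟨hn1, hsup⟩ := hw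
    have hy : R⁻¹ • ω w ∈ polarSet K := by
      intro x hx
      have hxR : ‖x‖ ≤ R := by
        have := hR hx; rwa [Metric.mem_closedBall, dist_zero_right] at this
      rw [real_inner_smul_right]
      calc R⁻¹ * ⟪x, ω w⟫_ℝ ≤ R⁻¹ * (‖x‖ * ‖ω w‖) := by
            apply mul_le_mul_of_nonneg_left (real_inner_le_norm x (ω w))
              (inv_nonneg.mpr hRpos.le)
        _ ≤ R⁻¹ * R := by
            rw [hn1, mul_one]
            exact mul_le_mul_of_nonneg_left hxR (inv_nonneg.mpr hRpos.le)
        _ = 1 := inv_mul_cancel₀ hRpos.ne'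
    have hhw : 0 < ⟪w, ω w⟫_ℝ := by
      have := hsup _ hy
      rw [real_inner_smul_left, real_inner_self_eq_norm_sq, hn1] at this
      have hRi : 0 < R⁻¹ := inv_pos.mpr hRpos
      nlinarith
    exact ⟨hhw, hsup⟩
  -- main case split on integrability of ν, ω
  by_cases hIntν : Integrable ν (μ.restrict A)
  case neg =>
    rw [integral_undef hIntν]
    simp only [inner_zero_left]
    positivity
  by_cases hIntω : Integrable ω (μ.restrict B)
  case neg =>
    rw [integral_undef hIntω]
    simp only [inner_zero_right]
    positivity
  set VB : EuclideanSpace ℝ (Fin n) := ∫ w in B, ω w ∂μ with hVB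
  -- pointwise (in z) bound: ⟪ν z, VB⟫ ≤ ⟪z, ν z⟫ * IB for good z
  have hkey : ∀ᵐ z ∂μ.restrict A, ⟪VB, ν z⟫_ℝ ≤ ⟪z, ν z⟫_ℝ * IB := by
    filter_upwards [hνA] with z hz
    obtain ⟨hgz, hyz⟩ := hz
    have h1 : ⟪ν z, VB⟫_ℝ = ∫ w in B, ⟪ν z, ω w⟫_ℝ ∂μ :=
      ((innerSL ℝ (ν z)).integral_comp_comm hIntω).symm
    rw [real_inner_comm, h1]
    have h2 : ∫ w in B, ⟪ν z, ω w⟫_ℝ ∂μ ≤ ∫ w in B, ⟪z, ν z⟫_ℝ * ⟪w, ω w⟫_ℝ ∂μ := by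
      apply integral_mono_ae (hIntω.const_inner (ν z)) (hIntgB.const_mul _)
      filter_upwards [hωB] with w hw
      obtain ⟨hhw, hsup⟩ := hw
      have := hsup _ hyz
      rw [real_inner_smul_left] at this
      have h4 := mul_le_mul_of_nonneg_left this hgz.le
      rw [← mul_assoc, mul_inv_cancel₀ hgz.ne', one_mul] at h4
      exact h4
    calc ∫ w in B, ⟪ν z, ω w⟫_ℝ ∂μ ≤ ∫ w in B, ⟪z, ν z⟫_ℝ * ⟪w, ω w⟫_ℝ ∂μ := h2
      _ = ⟪z, ν z⟫_ℝ * IB := by rw [integral_const_mul]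
  -- put everything together
  have hfin : ⟪∫ z in A, ν z ∂μ, VB⟫_ℝ = ∫ z in A, ⟪VB, ν z⟫_ℝ ∂μ := by
    rw [real_inner_comm]
    exact ((innerSL ℝ VB).integral_comp_comm hIntν).symm
  rw [hfin]
  calc ∫ z in A, ⟪VB, ν z⟫_ℝ ∂μ ≤ ∫ z in A, ⟪z, ν z⟫_ℝ * IB ∂μ := by
        exact integral_mono_ae (hIntν.const_inner VB) (hIntgA.mul_const _) hkey
    _ = IA * IB := by rw [integral_mul_const]
end
end
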